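/- arXiv:2012.12666 — 5 statements merged into one kernel-verified Lean document; each statement's English description precedes it below -/
import Mathlib

section
/- Let F be a number field of degree n, p an odd prime totally ramified in F with unique prime 𝔭 above p, and suppose gcd(n, (p-1)/2) = 1. Then every unit λ ∈ O_F^× satisfies λ ≡ 1 (mod 𝔭) or λ ≡ -1 (mod 𝔭). -/
open NumberField Polynomial

/-! Since `𝔭 ^ n = (p)` and `N(p) = p ^ n`, the residue field `𝓞 F ⧸ 𝔭` has `p` elements, so
`λ ≡ a (mod 𝔭)` for some `a ∈ ℤ`. Then `(λ - a) ^ n ∈ p 𝓞 F`, so multiplication by `λ` reduces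
mod `p` to `a` plus a nilpotent matrix, whose determinant is `a ^ n`: thus `±1 = N(λ) ≡ a ^ n`.
Both `(a ^ 2) ^ n` and `(a ^ 2) ^ ((p - 1) / 2)` are then `1` in `ZMod p`, and coprimality of the
exponents gives `a ^ 2 = 1`, i.e. `a ≡ ±1`. -/

theorem Matrix.det_scalar_add_of_isNilpotent {K ι : Type*} [CommRing K] [IsReduced K]
    [Fintype ι] [DecidableEq ι] {N : Matrix ι ι K} (hN : IsNilpotent N) (a : K) :
    (scalar ι a + N).det = a ^ Fintype.card ι := by
  have hchar : (-N).charpoly = X ^ Fintype.card ι := by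
    refine sub_eq_zero.mp <| Polynomial.ext fun i ↦ ?_
    have := isNilpotent_charpoly_sub_pow_of_isNilpotent hN.neg
    simpa using (Polynomial.isNilpotent_iff.mp this i).eq_zero
  rw [← sub_neg_eq_add, ← eval_charpoly, hchar, eval_pow, eval_X]

theorem Algebra.intCast_norm_eq_pow_of_sub_pow_mem {R : Type*} [CommRing R] [Module.Free ℤ R]
    [Module.Finite ℤ R] {p : ℕ} [Fact p.Prime] {x : R} {a : ℤ} {k : ℕ}
    (h : (x - a) ^ k ∈ Ideal.span {(p : R)}) :
    ((norm ℤ x : ℤ) : ZMod p) = (a : ZMod p) ^ Module.finrank ℤ R := by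
  let ι := Module.Free.ChooseBasisIndex ℤ R
  let b := Module.Free.chooseBasis ℤ R
  let f := (Int.castRingHom (ZMod p)).mapMatrix (m := ι)
  have hN : IsNilpotent (f (leftMulMatrix b (x - a))) := by
    obtain ⟨y, hy⟩ := Ideal.mem_span_singleton'.mp h
    refine ⟨k, ?_⟩
    rw [← map_pow, ← map_pow, ← hy, map_mul, map_mul, map_natCast, map_natCast,
      ← Matrix.diagonal_natCast, ZMod.natCast_self, Matrix.diagonal_zero, mul_zero]
  have hx :
      f (leftMulMatrix b x) = Matrix.scalar ι (a : ZMod p) + f (leftMulMatrix b (x - a)) := by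
    change _ = (a : Matrix ι ι (ZMod p)) + _
    rw [← map_intCast f, ← map_intCast (leftMulMatrix b), ← map_add, ← map_add,
      add_sub_cancel]
  rw [norm_eq_matrix_det b, ← eq_intCast (Int.castRingHom (ZMod p)), RingHom.map_det, hx,
    Matrix.det_scalar_add_of_isNilpotent hN, Module.finrank_eq_card_chooseBasisIndex]

theorem Ideal.absNorm_eq_of_span_natCast_eq_pow {S : Type*} [CommRing S] [IsDedekindDomain S]
    [Module.Free ℤ S] [Module.Finite ℤ S] {p n : ℕ} {P : Ideal S} (hn : n ≠ 0)
    (hrank : Module.finrank ℤ S = n) (h : Ideal.span {(p : S)} = P ^ n) :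
    absNorm P = p := by
  apply Nat.pow_left_injective hn
  dsimp only
  rw [← map_pow, ← h, absNorm_span_singleton, ← map_natCast (algebraMap ℤ S),
    Algebra.norm_algebraMap, hrank, Int.natAbs_pow, Int.natAbs_natCast]

theorem Ideal.exists_intCast_sub_mem_of_card_quotient {R : Type*} [CommRing R] {I : Ideal R}
    {p : ℕ} [Fact p.Prime] (h : Nat.card (R ⧸ I) = p) (x : R) : ∃ a : ℤ, x - a ∈ I := by
  have : Finite (R ⧸ I) := Nat.finite_of_card_ne_zero (h ▸ (Fact.out : p.Prime).ne_zero)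
  have : Fintype (R ⧸ I) := Fintype.ofFinite _
  have hcard : Fintype.card (R ⧸ I) = p := by rwa [← Nat.card_eq_fintype_card]
  have : CharP (R ⧸ I) p := charP_of_card_eq_prime hcard
  obtain ⟨z, hz⟩ := (ZMod.castHom_bijective (R ⧸ I) hcard).2 (Ideal.Quotient.mk I x)
  obtain ⟨a, rfl⟩ := ZMod.intCast_surjective z
  refine ⟨a, Ideal.Quotient.eq.mp ?_⟩
  rw [← hz, map_intCast, map_intCast]

theorem FiniteField.eq_one_or_eq_neg_one_of_pow_eq_one_or_eq_neg_one {K : Type*} [Field K]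
    [Fintype K] (hK : Odd (Fintype.card K)) {n : ℕ} (hn : n ≠ 0)
    (hgcd : n.gcd ((Fintype.card K - 1) / 2) = 1) {x : K} (hx : x ^ n = 1 ∨ x ^ n = -1) :
    x = 1 ∨ x = -1 := by
  have hx0 : x ≠ 0 := by
    rintro rfl
    simp [zero_pow hn] at hx
  have hn' : (x ^ 2) ^ n = 1 := by
    rw [← pow_mul, mul_comm, pow_mul]
    rcases hx with h | h <;> simp [h]
  have hm : (x ^ 2) ^ ((Fintype.card K - 1) / 2) = 1 := by
    rw [← pow_mul, Nat.two_mul_div_two_of_even (Nat.Odd.sub_odd hK odd_one),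
      pow_card_sub_one_eq_one x hx0]
  rw [← sq_eq_one_iff, ← pow_one (x ^ 2), ← hgcd]
  exact pow_gcd_eq_one.mpr ⟨hn', hm⟩

theorem Ideal.sub_intCast_mem_of_intCast_zmod_eq {R : Type*} [CommRing R] {I : Ideal R} {p : ℕ}
    (hp : (p : R) ∈ I) {x : R} {a c : ℤ} (hx : x - a ∈ I) (h : (a : ZMod p) = c) :
    x - c ∈ I := by
  obtain ⟨t, ht⟩ := (ZMod.intCast_eq_intCast_iff_dvd_sub a c p).mp h
  have : x - c = (x - a) - p * t := by
    have := congrArg (Int.cast : ℤ → R) ht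
    push_cast at this
    linear_combination -this
  rw [this]
  exact I.sub_mem hx (I.mul_mem_right _ hp)

theorem unit_congr_pm_one_mod_frakp_general
    (F : Type*) [Field F] [NumberField F] (n : ℕ) (hn : Module.finrank ℚ F = n)
    (p : ℕ) (hp : p.Prime) (hodd : Odd p)
    (𝔭 : Ideal (𝓞 F))
    (hram : Ideal.span {(p : 𝓞 F)} = 𝔭 ^ n)
    (hgcd : Nat.gcd n ((p - 1) / 2) = 1)
    (lam : (𝓞 F)ˣ) :
    (lam : 𝓞 F) - 1 ∈ 𝔭 ∨ (lam : 𝓞 F) + 1 ∈ 𝔭 := by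
  have : Fact p.Prime := ⟨hp⟩
  have hn0 : n ≠ 0 := hn ▸ Module.finrank_pos.ne'
  have hrank : Module.finrank ℤ (𝓞 F) = n := (RingOfIntegers.rank F).trans hn
  have hp𝔭 : (p : 𝓞 F) ∈ 𝔭 :=
    Ideal.pow_le_self hn0 (hram ▸ Ideal.mem_span_singleton_self _)
  have hcard : Nat.card (𝓞 F ⧸ 𝔭) = p := by
    rw [← Submodule.cardQuot_apply, ← Ideal.absNorm_apply,
      Ideal.absNorm_eq_of_span_natCast_eq_pow hn0 hrank hram]
  obtain ⟨a, ha⟩ := Ideal.exists_intCast_sub_mem_of_card_quotient hcard (lam : 𝓞 F)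
  have hnorm : ((Algebra.norm ℤ (lam : 𝓞 F) : ℤ) : ZMod p) = (a : ZMod p) ^ n :=
    hrank ▸ Algebra.intCast_norm_eq_pow_of_sub_pow_mem (hram ▸ Ideal.pow_mem_pow ha n)
  have hpow : (a : ZMod p) ^ n = 1 ∨ (a : ZMod p) ^ n = -1 := by
    rcases Int.isUnit_iff.mp (lam.isUnit.map (Algebra.norm ℤ)) with h | h <;>
      simp [← hnorm, h]
  rcases FiniteField.eq_one_or_eq_neg_one_of_pow_eq_one_or_eq_neg_one
      (by rwa [ZMod.card]) hn0 (by rwa [ZMod.card]) hpow with h | h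
  · left
    simpa using Ideal.sub_intCast_mem_of_intCast_zmod_eq hp𝔭 ha (c := 1) (by simpa using h)
  · right
    simpa using Ideal.sub_intCast_mem_of_intCast_zmod_eq hp𝔭 ha (c := -1) (by simpa using h)

/-- Let `F` be a number field of degree `n`, `p` an odd prime totally
ramified in `F` with unique prime `𝔭` above `p`, and `gcd(n, (p-1)/2) = 1`. Then every
unit `λ` of `𝓞 F` satisfies `λ ≡ 1 (mod 𝔭)` or `λ ≡ -1 (mod 𝔭)`. -/
theorem unit_congr_pm_one_mod_frakp
    (F : Type*) [Field F] [NumberField F] (n : ℕ) (hn : Module.finrank ℚ F = n)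
    (p : ℕ) (hp : p.Prime) (hodd : Odd p)
    (𝔭 : Ideal (𝓞 F)) (h𝔭 : 𝔭.IsPrime)
    (hram : Ideal.span {(p : 𝓞 F)} = 𝔭 ^ n)
    (hgcd : Nat.gcd n ((p - 1) / 2) = 1)
    (lam : (𝓞 F)ˣ) :
    (lam : 𝓞 F) - 1 ∈ 𝔭 ∨ (lam : 𝓞 F) + 1 ∈ 𝔭 :=
  unit_congr_pm_one_mod_frakp_general F n hn p hp hodd 𝔭 hram hgcd lam
end

section
/- Let F be a number field of degree n and p ≥ 5 a prime such that gcd(n, (p-1)/2) = 1 and p is totally ramified in F. Then the unit equation λ + μ = 1 has no solutions with λ, μ ∈ O_F^×. -/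
/-!
Since `p` is totally ramified, `𝓞 F ⧸ 𝔭 ≅ 𝔽_p`, so every unit `u` is congruent mod `𝔭` to an
integer `a`, and then `N(u) ≡ aⁿ (mod p)`. As `N(u) = ±1`, the residue of `u` has order dividing
`gcd(2n, p - 1) = 2`, i.e. it is `±1`. A unit equation `λ + μ = 1` would therefore reduce to
`±1 ± 1 = 1` in `𝔽_p`, which forces `p ∣ 3`.
-/

open NumberField Polynomial Module

/-- The left-multiplication matrix of `ε` is nilpotent modulo `ker f`, so its characteristic
polynomial reduces to `X ^ finrank R S`. -/
theorem Algebra.map_norm_algebraMap_sub_eq_pow {R S T : Type*} [CommRing R] [Nontrivial R]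
    [CommRing S] [Algebra R S] [Module.Free R S] [Module.Finite R S] [CommRing T] [IsReduced T]
    (f : R →+* T) {r : R} (hr : f r = 0) {ε : S} {k : ℕ} (hε : algebraMap R S r ∣ ε ^ k)
    (a : R) : f (Algebra.norm R (algebraMap R S a - ε)) = f a ^ finrank R S := by
  classical
  let b := Module.Free.chooseBasis R S
  set A := Algebra.leftMulMatrix b ε
  have hnorm : Algebra.norm R (algebraMap R S a - ε) = A.charpoly.eval a := by
    rw [Algebra.norm_eq_matrix_det b, map_sub, AlgHom.commutes, Matrix.charpoly, eval_det,
      Matrix.matPolyEquiv_charmatrix]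
    simp [Matrix.scalar, algebraMap, A]
  have hnil : IsNilpotent (A.map f) := by
    obtain ⟨t, ht⟩ := hε
    refine ⟨k, ?_⟩
    rw [← RingHom.mapMatrix_apply, ← map_pow, ← map_pow, ht, map_mul, AlgHom.commutes, map_mul]
    simp [Matrix.algebraMap_eq_diagonal, hr]
  have hchar : A.charpoly.map f = X ^ finrank R S := by
    rw [← Matrix.charpoly_map, finrank_eq_card_chooseBasisIndex, ← sub_eq_zero]
    ext i
    simpa using (Polynomial.isNilpotent_iff.mp
      (Matrix.isNilpotent_charpoly_sub_pow_of_isNilpotent hnil) i).eq_zero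
  rw [hnorm, ← eval_map_apply, hchar, eval_pow, eval_X]

theorem Ideal.exists_ringHom_zmod_ker_eq {R : Type*} [CommRing R] {I : Ideal R} {p : ℕ}
    (hp : p.Prime) (hI : Nat.card (R ⧸ I) = p) : ∃ φ : R →+* ZMod p, RingHom.ker φ = I := by
  have : Finite (R ⧸ I) := Nat.finite_of_card_ne_zero (hI ▸ hp.ne_zero)
  have := Fintype.ofFinite (R ⧸ I)
  let e := ZMod.ringEquivOfPrime (R ⧸ I) hp (by rwa [← Nat.card_eq_fintype_card])
  exact ⟨e.symm.toRingHom.comp (Ideal.Quotient.mk I), by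
    rw [RingHom.ker_comp_of_injective _ e.symm.injective, Ideal.mk_ker]⟩

theorem ZMod.eq_one_or_neg_one_of_pow_two_mul_eq_one {p n : ℕ} [Fact p.Prime] (hp2 : p ≠ 2)
    (hn : n ≠ 0) (hgcd : n.gcd ((p - 1) / 2) = 1) {a : ZMod p} (ha : a ^ (2 * n) = 1) :
    a = 1 ∨ a = -1 := by
  have ha0 : a ≠ 0 := by
    rintro rfl
    simp [hn] at ha
  have hgcd2 : (2 * n).gcd (p - 1) = 2 := by
    rw [← Nat.two_mul_div_two_of_even (Nat.Prime.even_sub_one Fact.out hp2), Nat.gcd_mul_left,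
      hgcd, mul_one]
  rw [← sq_eq_one_iff, ← hgcd2]
  exact pow_gcd_eq_one.mpr ⟨ha, ZMod.pow_card_sub_one_eq_one ha0⟩

theorem add_ne_one_of_eq_one_or_neg_one {R : Type*} [CommRing R] [Nontrivial R]
    (h3 : (3 : R) ≠ 0) {a b : R} (ha : a = 1 ∨ a = -1) (hb : b = 1 ∨ b = -1) : a + b ≠ 1 := by
  intro hab
  rcases ha with rfl | rfl <;> rcases hb with rfl | rfl
  · exact one_ne_zero (by linear_combination hab)
  · exact one_ne_zero (by linear_combination -hab)
  · exact one_ne_zero (by linear_combination -hab)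
  · exact h3 (by linear_combination -hab)

namespace NumberField

variable {F : Type*} [Field F] [NumberField F] {p : ℕ} {𝔭 : Ideal (𝓞 F)}

theorem card_quotient_eq_of_span_eq_pow_finrank
    (hram : Ideal.span {(p : 𝓞 F)} = 𝔭 ^ finrank ℚ F) : Nat.card (𝓞 F ⧸ 𝔭) = p := by
  rw [← Submodule.cardQuot_apply, ← Ideal.absNorm_apply]
  apply Nat.pow_left_injective (finrank_pos : 0 < finrank ℚ F).ne'
  dsimp only
  rw [← map_pow, ← hram, Ideal.absNorm_span_natCast, RingOfIntegers.rank]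

variable [Fact p.Prime] {φ : 𝓞 F →+* ZMod p}

theorem intCast_norm_eq_pow (hram : Ideal.span {(p : 𝓞 F)} = 𝔭 ^ finrank ℚ F)
    (hφ : RingHom.ker φ = 𝔭) (x : 𝓞 F) : (Algebra.norm ℤ x : ZMod p) = φ x ^ finrank ℚ F := by
  obtain ⟨a, ha⟩ := ZMod.intCast_surjective (φ x)
  have hmem : (a : 𝓞 F) - x ∈ 𝔭 := by
    rw [← hφ, RingHom.mem_ker, map_sub, map_intCast, ha, sub_self]
  have hdvd : algebraMap ℤ (𝓞 F) p ∣ ((a : 𝓞 F) - x) ^ finrank ℚ F := by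
    rw [← Ideal.mem_span_singleton, map_natCast, hram]
    exact Ideal.pow_mem_pow hmem _
  have := Algebra.map_norm_algebraMap_sub_eq_pow (Int.castRingHom (ZMod p))
    (by simp) hdvd a
  rwa [eq_intCast, algebraMap_int_eq, eq_intCast, sub_sub_cancel, RingOfIntegers.rank,
    eq_intCast, ha] at this

theorem map_unit_eq_one_or_neg_one (hram : Ideal.span {(p : 𝓞 F)} = 𝔭 ^ finrank ℚ F)
    (hφ : RingHom.ker φ = 𝔭) (hp2 : p ≠ 2) (hgcd : (finrank ℚ F).gcd ((p - 1) / 2) = 1)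
    (u : (𝓞 F)ˣ) : φ u = 1 ∨ φ u = -1 := by
  refine ZMod.eq_one_or_neg_one_of_pow_two_mul_eq_one hp2 finrank_pos.ne' hgcd ?_
  rw [pow_mul', ← intCast_norm_eq_pow hram hφ, ← Int.cast_pow, Int.isUnit_sq (u.isUnit.map _),
    Int.cast_one]

end NumberField

theorem no_unit_equation_solution_of_totally_ramified_general
    (F : Type*) [Field F] [NumberField F] (n : ℕ) (hn : Module.finrank ℚ F = n)
    (p : ℕ) (hp : p.Prime) (hp5 : 5 ≤ p)
    (𝔭 : Ideal (𝓞 F))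
    (hram : Ideal.span {(p : 𝓞 F)} = 𝔭 ^ n)
    (hgcd : Nat.gcd n ((p - 1) / 2) = 1) :
    ¬ ∃ lam mu : (𝓞 F)ˣ, (lam : 𝓞 F) + (mu : 𝓞 F) = 1 := by
  subst hn
  have : Fact p.Prime := ⟨hp⟩
  rintro ⟨lam, mu, hsum⟩
  obtain ⟨φ, hφ⟩ :=
    Ideal.exists_ringHom_zmod_ker_eq hp (card_quotient_eq_of_span_eq_pow_finrank hram)
  have h3 : (3 : ZMod p) ≠ 0 := by
    exact_mod_cast (ZMod.natCast_eq_zero_iff 3 p).not.mpr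
      (Nat.not_dvd_of_pos_of_lt (by norm_num) (by omega))
  refine add_ne_one_of_eq_one_or_neg_one h3
    (map_unit_eq_one_or_neg_one hram hφ (by omega) hgcd lam)
    (map_unit_eq_one_or_neg_one hram hφ (by omega) hgcd mu) ?_
  rw [← map_add, hsum, map_one]

/-- Let `F` be a number field of degree `n` and `p ≥ 5` a prime such
that `gcd(n, (p-1)/2) = 1` and `p` is totally ramified in `F`. Then the unit equation
`λ + μ = 1` has no solutions in units of `𝓞 F`. -/
theorem no_unit_equation_solution_of_totally_ramified
    (F : Type*) [Field F] [NumberField F] (n : ℕ) (hn : Module.finrank ℚ F = n)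
    (p : ℕ) (hp : p.Prime) (hp5 : 5 ≤ p)
    (𝔭 : Ideal (𝓞 F)) (h𝔭 : 𝔭.IsPrime)
    (hram : Ideal.span {(p : 𝓞 F)} = 𝔭 ^ n)
    (hgcd : Nat.gcd n ((p - 1) / 2) = 1) :
    ¬ ∃ lam mu : (𝓞 F)ˣ, (lam : 𝓞 F) + (mu : 𝓞 F) = 1 :=
  no_unit_equation_solution_of_totally_ramified_general F n hn p hp hp5 𝔭 hram hgcd
end

section
/- Let F be a number field in which 2 has a unique prime 𝔮 above it, and let S = {𝔮}. If (λ, μ) is a solution to the S-unit equation λ + μ = 1 with λ, μ ∈ O_S^×, then there exists a solution (λ', μ') with λ' + μ' = 1, λ' ∈ O_F ∩ O_S^×, μ' ∈ O_F^×, and max{|ord_𝔮(λ')|, |ord_𝔮(μ')|} = max{|ord_𝔮(λ)|, |ord_𝔮(μ)|}. -/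
/-!
At `𝔮` the ultrametric inequality applied to `λ + μ = 1` leaves three cases:
`v(λ) < 1 = v(μ)`, `v(λ) = 1 ≥ v(μ)`, or `v(λ) = v(μ) > 1`. In the last case
`λ⁻¹ + (-μ/λ) = 1` is again an `S`-unit solution, now with `v(λ⁻¹) < 1 = v(-μ/λ)`, and the
same `max |ord_𝔮|`. Since `S`-units have valuation `1` away from `𝔮`, a solution with
`v(λ') ≤ 1 = v(μ')` consists of an integer and a unit of `𝓞 F`.
-/

open IsDedekindDomain NumberField

/-- The `𝔮`-adic valuation `ord_𝔮 : F → ℤ` (junk value `0` at `x = 0`). -/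
noncomputable def ordQ {K : Type*} [Field K] [NumberField K]
    (v : HeightOneSpectrum (𝓞 K)) (x : K) : ℤ :=
  if h : v.valuation K x = 0 then 0
  else - Multiplicative.toAdd (WithZero.unzero h)

namespace IsDedekindDomain.HeightOneSpectrum

open WithZero

variable {R : Type*} [CommRing R] [IsDedekindDomain R]
  {K : Type*} [Field K] [Algebra R K] [IsFractionRing R K]

theorem exists_unit_of_valuation_eq_one {x : Kˣ}
    (h : ∀ v : HeightOneSpectrum R, v.valuation K x = 1) :
    ∃ u : Rˣ, algebraMap R K u = x := by
  obtain ⟨a, ha⟩ := mem_integers_of_valuation_le_one K (x : K) fun v => (h v).le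
  obtain ⟨b, hb⟩ := mem_integers_of_valuation_le_one (R := R) K (x⁻¹ : Kˣ) fun v => by
    simp [h v]
  have hinj := IsFractionRing.injective R K
  refine ⟨⟨a, b, hinj ?_, hinj ?_⟩, ha⟩ <;> simp [ha, hb]

theorem neg_mem_unit {S : Set (HeightOneSpectrum R)} {x : Kˣ} (hx : x ∈ S.unit K) :
    -x ∈ S.unit K := fun v hv => by
  simpa only [Units.val_neg, Valuation.map_neg] using hx v hv

variable (𝔮 : HeightOneSpectrum R)

theorem mem_range_of_mem_unit_singleton {x : Kˣ} (hx : x ∈ ({𝔮} : Set _).unit K)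
    (h𝔮 : 𝔮.valuation K x ≤ 1) : (x : K) ∈ (algebraMap R K).range := by
  refine mem_integers_of_valuation_le_one K x fun v => ?_
  by_cases hv : v = 𝔮
  · exact hv ▸ h𝔮
  · exact (hx v hv).le

theorem exists_unit_of_mem_unit_singleton {x : Kˣ} (hx : x ∈ ({𝔮} : Set _).unit K)
    (h𝔮 : 𝔮.valuation K x = 1) : ∃ u : Rˣ, algebraMap R K u = x := by
  refine exists_unit_of_valuation_eq_one fun v => ?_
  by_cases hv : v = 𝔮
  · exact hv ▸ h𝔮
  · exact hx v hv

theorem exists_sunit_solution_valuation_le_one_and_eq_one {x y : Kˣ}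
    (hx : x ∈ ({𝔮} : Set _).unit K) (hy : y ∈ ({𝔮} : Set _).unit K) (hxy : (x : K) + y = 1) :
    ∃ x' y' : Kˣ, x' ∈ ({𝔮} : Set _).unit K ∧ y' ∈ ({𝔮} : Set _).unit K ∧
      (x' : K) + y' = 1 ∧ 𝔮.valuation K x' ≤ 1 ∧ 𝔮.valuation K y' = 1 ∧
      max |log (𝔮.valuation K x')| |log (𝔮.valuation K y')|
        = max |log (𝔮.valuation K x)| |log (𝔮.valuation K y)| := by
  set v := 𝔮.valuation K
  have hy_eq : (y : K) = 1 - x := eq_sub_of_add_eq' hxy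
  have hx_eq : (x : K) = 1 - y := eq_sub_of_add_eq hxy
  rcases lt_trichotomy (v x) 1 with hlt | heq | hgt
  · exact ⟨x, y, hx, hy, hxy, hlt.le, hy_eq ▸ v.map_one_sub_of_lt hlt, rfl⟩
  · refine ⟨y, x, hy, hx, by rw [add_comm, hxy], ?_, heq, max_comm _ _⟩
    calc v y = v (1 - x) := by rw [hy_eq]
      _ ≤ max (v 1) (v x) := v.map_sub _ _
      _ = 1 := by rw [heq, map_one, max_self]
  · have hvy : v y = v x := by
      rw [hy_eq, v.map_sub_eq_of_lt_right (by rwa [map_one])]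
    have hvx0 : v x ≠ 0 := by simp
    refine ⟨x⁻¹, -(y * x⁻¹), inv_mem hx, neg_mem_unit (mul_mem hy (inv_mem hx)), ?_, ?_, ?_, ?_⟩
    · simp only [Units.val_inv_eq_inv_val, Units.val_neg, Units.val_mul]
      field_simp
      rw [hx_eq]
      ring
    · simpa using (inv_lt_one₀ (zero_lt_iff.mpr hvx0)).mpr hgt |>.le
    · simp [hvy, hvx0]
    · simp [hvy, hvx0]

end IsDedekindDomain.HeightOneSpectrum

theorem ordQ_eq_neg_log {K : Type*} [Field K] [NumberField K] (v : HeightOneSpectrum (𝓞 K))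
    (x : K) : ordQ v x = -WithZero.log (v.valuation K x) := by
  unfold ordQ
  split_ifs with h
  · simp [h]
  · rw [WithZero.toAdd_unzero_eq_log]

theorem sunit_equation_integral_solution_general
    (F : Type*) [Field F] [NumberField F]
    (𝔮 : HeightOneSpectrum (𝓞 F))
    (lam mu : Fˣ)
    (hlam : lam ∈ ({𝔮} : Set (HeightOneSpectrum (𝓞 F))).unit F)
    (hmu : mu ∈ ({𝔮} : Set (HeightOneSpectrum (𝓞 F))).unit F)
    (hsum : (lam : F) + (mu : F) = 1) :
    ∃ lam' mu' : Fˣ,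
      lam' ∈ ({𝔮} : Set (HeightOneSpectrum (𝓞 F))).unit F ∧
      mu' ∈ ({𝔮} : Set (HeightOneSpectrum (𝓞 F))).unit F ∧
      (lam' : F) + (mu' : F) = 1 ∧
      (∃ a : 𝓞 F, algebraMap (𝓞 F) F a = (lam' : F)) ∧
      (∃ u : (𝓞 F)ˣ, algebraMap (𝓞 F) F (u : 𝓞 F) = (mu' : F)) ∧
      max |ordQ 𝔮 (lam' : F)| |ordQ 𝔮 (mu' : F)|
        = max |ordQ 𝔮 (lam : F)| |ordQ 𝔮 (mu : F)| := by
  obtain ⟨lam', mu', hlam', hmu', hsum', hval_lam', hval_mu', hmax⟩ :=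
    HeightOneSpectrum.exists_sunit_solution_valuation_le_one_and_eq_one 𝔮 hlam hmu hsum
  refine ⟨lam', mu', hlam', hmu', hsum',
    HeightOneSpectrum.mem_range_of_mem_unit_singleton 𝔮 hlam' hval_lam',
    HeightOneSpectrum.exists_unit_of_mem_unit_singleton 𝔮 hmu' hval_mu', ?_⟩
  simpa only [ordQ_eq_neg_log, abs_neg] using hmax

/-- **simplifying lemma.** Let `F` be a number field in which `2` has a
unique prime `𝔮` above it and `S = {𝔮}`.  If `(λ, μ)` is a solution of the `S`-unit
equation `λ + μ = 1`, then there is a solution `(λ', μ')` with `λ' ∈ 𝓞 F ∩ 𝓞_S^×`,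
`μ' ∈ 𝓞 F^×` and `max(|ord_𝔮 λ'|, |ord_𝔮 μ'|) = max(|ord_𝔮 λ|, |ord_𝔮 μ|)`. -/
theorem sunit_equation_integral_solution
    (F : Type*) [Field F] [NumberField F]
    (𝔮 : HeightOneSpectrum (𝓞 F)) (h2 : (2 : 𝓞 F) ∈ 𝔮.asIdeal)
    (huniq : ∀ v : HeightOneSpectrum (𝓞 F), (2 : 𝓞 F) ∈ v.asIdeal → v = 𝔮)
    (lam mu : Fˣ)
    (hlam : lam ∈ ({𝔮} : Set (HeightOneSpectrum (𝓞 F))).unit F)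
    (hmu : mu ∈ ({𝔮} : Set (HeightOneSpectrum (𝓞 F))).unit F)
    (hsum : (lam : F) + (mu : F) = 1) :
    ∃ lam' mu' : Fˣ,
      lam' ∈ ({𝔮} : Set (HeightOneSpectrum (𝓞 F))).unit F ∧
      mu' ∈ ({𝔮} : Set (HeightOneSpectrum (𝓞 F))).unit F ∧
      (lam' : F) + (mu' : F) = 1 ∧
      (∃ a : 𝓞 F, algebraMap (𝓞 F) F a = (lam' : F)) ∧
      (∃ u : (𝓞 F)ˣ, algebraMap (𝓞 F) F (u : 𝓞 F) = (mu' : F)) ∧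
      max |ordQ 𝔮 (lam' : F)| |ordQ 𝔮 (mu' : F)|
        = max |ordQ 𝔮 (lam : F)| |ordQ 𝔮 (mu : F)| :=
  sunit_equation_integral_solution_general F 𝔮 lam mu hlam hmu hsum
end

section
/- Let F be a number field of degree n with 3 ∤ n in which 3 splits completely. Then the unit equation λ + μ = 1 has no solutions with λ, μ ∈ O_F^×. -/
/-!
In a residue field `𝔽₃` the only way to write `1` as a sum of two units is `(-1) + (-1)`, so a
solution `λ + μ = 1` has `λ ≡ μ ≡ -1` modulo every prime above `3`. As `3` is unramified, `(3)` is
the intersection of these primes, hence `λ = -1 + 3c` and `μ = -1 + 3d` with `c + d = 1`.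
Reducing `N(1 - 3c) = ±1` modulo `9` gives `3 ∣ Tr c`, likewise `3 ∣ Tr d`, whereas
`Tr c + Tr d = Tr 1 = n`.
-/

open NumberField Ideal UniqueFactorizationMonoid

theorem eq_neg_one_of_add_eq_one_of_natCard_eq_three {K : Type*} [Field K] (hK : Nat.card K = 3)
    {x y : K} (hx : x ≠ 0) (hy : y ≠ 0) (h : x + y = 1) : x = -1 := by
  have : Fintype K := @Fintype.ofFinite K (Nat.finite_of_card_ne_zero (by omega))
  have hsq : x ^ 2 = 1 := by
    have := FiniteField.pow_card_sub_one_eq_one x hx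
    rwa [Fintype.card_eq_nat_card, hK] at this
  refine (sq_eq_one_iff.mp hsq).resolve_left fun hx1 => hy ?_
  linear_combination h - hx1

theorem Ideal.natCard_quotient_eq_of_inertiaDeg'_eq_one {R : Type*} [CommRing R]
    [IsDedekindDomain R] [Module.Free ℤ R] [Module.Finite ℤ R] {p : ℕ} (hp : p.Prime)
    {P : Ideal R} (hf : (span {(p : ℤ)}).inertiaDeg' P = 1) : Nat.card (R ⧸ P) = p := by
  have : P.LiesOver (span {(p : ℤ)}) := by
    refine ⟨by_contra fun hc => ?_⟩
    rw [inertiaDeg', dif_neg (Ne.symm hc)] at hf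
    exact zero_ne_one hf
  rw [← Submodule.cardQuot_apply, ← absNorm_apply, absNorm_eq_pow_inertiaDeg' P hp, hf, pow_one]

theorem add_one_mem_of_isUnit_of_add_eq_one {R : Type*} [CommRing R] [IsDedekindDomain R]
    [Module.Free ℤ R] [Module.Finite ℤ R] {P : Ideal R} [P.IsMaximal]
    (hf : (span {(3 : ℤ)}).inertiaDeg' P = 1) {x y : R} (hx : IsUnit x) (hy : IsUnit y)
    (h : x + y = 1) : x + 1 ∈ P := by
  let := Ideal.Quotient.field P
  have hx' : Ideal.Quotient.mk P x = -1 :=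
    eq_neg_one_of_add_eq_one_of_natCard_eq_three
      (by exact_mod_cast natCard_quotient_eq_of_inertiaDeg'_eq_one Nat.prime_three hf)
      (hx.map _).ne_zero (hy.map _).ne_zero (by rw [← map_add, h, map_one])
  rw [← Ideal.Quotient.eq_zero_iff_mem, map_add, map_one, hx', neg_add_cancel]

theorem Ideal.isRadical_map_of_ramificationIdx'_le_one {R S : Type*} [CommRing R] [CommRing S]
    [IsDedekindDomain S] [Algebra R S] {p : Ideal R} (hp : map (algebraMap R S) p ≠ ⊥)
    (he : ∀ P : Ideal S, P.IsPrime → map (algebraMap R S) p ≤ P → p.ramificationIdx' P ≤ 1) :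
    (map (algebraMap R S) p).IsRadical := by
  have hsq : Squarefree (map (algebraMap R S) p) := by
    rw [squarefree_iff_nodup_normalizedFactors hp, Multiset.nodup_iff_count_le_one]
    intro P
    by_cases hP : P ∈ normalizedFactors (map (algebraMap R S) p)
    · have hPprime := prime_of_normalized_factor P hP
      rw [← IsDedekindDomain.ramificationIdx'_eq_normalizedFactors_count hp
        (isPrime_of_prime hPprime) hPprime.ne_zero]
      exact he P (isPrime_of_prime hPprime) (le_of_dvd (dvd_of_mem_normalizedFactors hP))
    · simp [Multiset.count_eq_zero_of_notMem hP]
  rintro x ⟨k, hk⟩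
  have hdvd : map (algebraMap R S) p ∣ span {x} ^ k := by
    rw [span_singleton_pow, dvd_iff_le, span_singleton_le_iff_mem]
    exact hk
  exact (span_singleton_le_iff_mem _).mp (le_of_dvd (hsq.isRadical k _ hdvd))

theorem dvd_trace_of_isUnit_one_add_smul {S : Type*} [CommRing S] [Module.Free ℤ S]
    [Module.Finite ℤ S] {p : ℤ} (hp : 2 < p.natAbs) {c : S} (hu : IsUnit (1 + p • c)) :
    p ∣ Algebra.trace ℤ S c := by
  obtain ⟨r, hr⟩ := Algebra.norm_one_add_smul p c
  have hp0 : p ≠ 0 := by rintro rfl; simp at hp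
  rcases Int.isUnit_iff.mp (hr ▸ hu.map (Algebra.norm ℤ)) with h | h
  · refine ⟨-r, mul_left_cancel₀ hp0 ?_⟩
    linear_combination h
  · have h2 : p ∣ 2 := ⟨-(Algebra.trace ℤ S c + r * p), by linear_combination h⟩
    exact absurd (Nat.le_of_dvd two_pos (Int.natAbs_dvd_natAbs.mpr h2)) (by omega)

section UnitEquation

variable {F : Type*} [Field F] [NumberField F]

theorem three_dvd_add_one_of_add_eq_one
    (hsplit : ∀ P : Ideal (𝓞 F), P.IsPrime → (3 : 𝓞 F) ∈ P →
      Ideal.ramificationIdx' (Ideal.span {(3 : ℤ)}) P = 1 ∧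
      Ideal.inertiaDeg' (Ideal.span {(3 : ℤ)}) P = 1)
    {x y : 𝓞 F} (hx : IsUnit x) (hy : IsUnit y) (h : x + y = 1) : (3 : 𝓞 F) ∣ x + 1 := by
  have h30 : (3 : 𝓞 F) ≠ 0 := OfNat.ofNat_ne_zero 3
  have hmap : map (algebraMap ℤ (𝓞 F)) (span {(3 : ℤ)}) = span {(3 : 𝓞 F)} := by
    rw [map_span, Set.image_singleton, map_ofNat]
  have hrad := isRadical_map_of_ramificationIdx'_le_one (p := span {(3 : ℤ)})
    (by rwa [hmap, Ne, span_singleton_eq_bot]) fun P hP h3 => by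
      rw [hmap, span_singleton_le_iff_mem] at h3
      exact (hsplit P hP h3).1.le
  rw [hmap] at hrad
  rw [← mem_span_singleton, ← hrad.radical, radical_eq_sInf, Submodule.mem_sInf]
  rintro (P : Ideal (𝓞 F)) ⟨h3, hP⟩
  rw [span_singleton_le_iff_mem] at h3
  have : P.IsMaximal := hP.isMaximal ((Submodule.ne_bot_iff P).mpr ⟨3, h3, h30⟩)
  exact add_one_mem_of_isUnit_of_add_eq_one (hsplit P hP h3).2 hx hy h

theorem three_dvd_trace_of_isUnit_of_add_one_eq {x c : 𝓞 F} (hx : IsUnit x)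
    (hc : x + 1 = 3 * c) : (3 : ℤ) ∣ Algebra.trace ℤ (𝓞 F) c := by
  refine neg_dvd.mp (dvd_trace_of_isUnit_one_add_smul (by norm_num) ?_)
  convert hx.neg using 1
  linear_combination hc

end UnitEquation

/-- **Triantafillou.** Let `F` be a number field of degree `n` with
`3 ∤ n` in which `3` splits completely.  Then the unit equation `λ + μ = 1` has no
solutions in units of `𝓞 F`. -/
theorem no_unit_equation_solution_of_three_splits
    (F : Type*) [Field F] [NumberField F] (n : ℕ) (hn : Module.finrank ℚ F = n)
    (hndvd : ¬ (3 ∣ n))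
    (hsplit : ∀ P : Ideal (𝓞 F), P.IsPrime → (3 : 𝓞 F) ∈ P →
      Ideal.ramificationIdx' (Ideal.span {(3 : ℤ)}) P = 1 ∧
      Ideal.inertiaDeg' (Ideal.span {(3 : ℤ)}) P = 1) :
    ¬ ∃ lam mu : (𝓞 F)ˣ, (lam : 𝓞 F) + (mu : 𝓞 F) = 1 := by
  rintro ⟨lam, mu, h⟩
  obtain ⟨c, hc⟩ := three_dvd_add_one_of_add_eq_one hsplit lam.isUnit mu.isUnit h
  obtain ⟨d, hd⟩ := three_dvd_add_one_of_add_eq_one hsplit mu.isUnit lam.isUnit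
    (by rw [add_comm, h])
  have hcd : c + d = 1 :=
    mul_left_cancel₀ (OfNat.ofNat_ne_zero (R := 𝓞 F) 3) (by linear_combination h - hc - hd)
  have htrace : Algebra.trace ℤ (𝓞 F) c + Algebra.trace ℤ (𝓞 F) d = n := by
    rw [← map_add, hcd, ← map_one (algebraMap ℤ (𝓞 F)), Algebra.trace_algebraMap,
      RingOfIntegers.rank, hn, nsmul_eq_mul, mul_one]
  have h3n : (3 : ℤ) ∣ n := htrace ▸
    dvd_add (three_dvd_trace_of_isUnit_of_add_one_eq lam.isUnit hc)
      (three_dvd_trace_of_isUnit_of_add_one_eq mu.isUnit hd)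
  exact hndvd (by exact_mod_cast h3n)
end

section
/- Let F be a number field of degree n, and let λ ∈ O_F^× be a unit with λ ≡ -1 (mod 3O_F). Write λ = -1 + 3φ with φ ∈ O_F. Then Trace_{F/ℚ}(φ) ≡ 0 (mod 3). -/
open NumberField

lemma aux_prod {ι : Type*} [DecidableEq ι] (s : Finset ι) (f : ι → ℤ) :
    (9:ℤ) ∣ (∏ i ∈ s, (1 - 3 * f i)) - (1 - 3 * ∑ i ∈ s, f i) := by
  induction s using Finset.induction with
  | empty => simp
  | @insert a s h ih =>
    rw [Finset.prod_insert h, Finset.sum_insert h]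
    obtain ⟨c, hc⟩ := ih
    refine ⟨f a * ∑ i ∈ s, f i + c * (1 - 3 * f a), ?_⟩
    have : ∏ i ∈ s, (1 - 3 * f i) = (1 - 3 * ∑ i ∈ s, f i) + 9 * c := by linarith
    rw [this]; ring

lemma aux_det {m : Type*} [Fintype m] [DecidableEq m] (N : Matrix m m ℤ) :
    (9:ℤ) ∣ ((1 : Matrix m m ℤ) - (3:ℤ) • N).det - (1 - 3 * Matrix.trace N) := by
  classical
  set M : Matrix m m ℤ := (1 : Matrix m m ℤ) - (3:ℤ) • N with hM
  rw [Matrix.det_apply]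
  rw [← Finset.add_sum_erase _ _ (Finset.mem_univ (1 : Equiv.Perm m))]
  have hMentry : ∀ a b, M a b = (if a = b then 1 else 0) - 3 * N a b := by
    intro a b
    rw [hM, Matrix.sub_apply, Matrix.smul_apply, Matrix.one_apply, smul_eq_mul]
  have hid : Equiv.Perm.sign (1 : Equiv.Perm m) • ∏ i, M ((1 : Equiv.Perm m) i) i
      = ∏ i, (1 - 3 * N i i) := by
    simp [hMentry]
  rw [hid]
  have h1 : (9:ℤ) ∣ (∏ i, (1 - 3 * N i i)) - (1 - 3 * Matrix.trace N) := by
    have := aux_prod Finset.univ (fun i => N i i)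
    simpa [Matrix.trace] using this
  have h2 : (9:ℤ) ∣ ∑ σ ∈ Finset.univ.erase (1 : Equiv.Perm m),
      Equiv.Perm.sign σ • ∏ i, M (σ i) i := by
    refine Finset.dvd_sum ?_
    intro σ hσ
    have hσ1 : σ ≠ 1 := (Finset.mem_erase.mp hσ).1
    obtain ⟨i, hi⟩ : ∃ i, σ i ≠ i := by
      by_contra h; push_neg at h; exact hσ1 (Equiv.ext h)
    set j := σ i with hj
    have hji : j ≠ i := hi
    have hσj : σ j ≠ j := fun h => hi (σ.injective (h.trans hj))
    have entry : ∀ k, σ k ≠ k → M (σ k) k = -3 * N (σ k) k := by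
      intro k hk
      rw [hMentry, if_neg hk]; ring
    have h3i : (3:ℤ) ∣ M (σ i) i := by rw [entry i hi]; exact ⟨-N (σ i) i, by ring⟩
    have h3j : (3:ℤ) ∣ M (σ j) j := by rw [entry j hσj]; exact ⟨-N (σ j) j, by ring⟩
    have hprod : (9:ℤ) ∣ ∏ k, M (σ k) k := by
      rw [← Finset.mul_prod_erase _ _ (Finset.mem_univ i)]
      have hjmem : j ∈ Finset.univ.erase i := Finset.mem_erase.mpr ⟨hji, Finset.mem_univ j⟩
      have : (3:ℤ) ∣ ∏ k ∈ Finset.univ.erase i, M (σ k) k :=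
        h3j.trans (Finset.dvd_prod_of_mem _ hjmem)
      exact (show (9:ℤ) = 3 * 3 by norm_num) ▸ mul_dvd_mul h3i this
    rcases Int.units_eq_one_or (Equiv.Perm.sign σ) with h | h <;> rw [h] <;> simp [hprod]
  obtain ⟨a, ha⟩ := h1
  obtain ⟨b, hb⟩ := h2
  exact ⟨a + b, by linarith⟩

/-- Let `F` be a number field of degree `n` and `λ ∈ 𝓞 F^×` a unit
with `λ = -1 + 3φ` for some `φ ∈ 𝓞 F`.  Then `Trace_{F/ℚ}(φ) ≡ 0 (mod 3)`. -/
theorem trace_congr_zero_mod_three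
    (F : Type*) [Field F] [NumberField F] (n : ℕ) (hn : Module.finrank ℚ F = n)
    (lam : (𝓞 F)ˣ) (φ : 𝓞 F) (hφ : (lam : 𝓞 F) = -1 + 3 * φ) :
    Algebra.trace ℤ (𝓞 F) φ ≡ 0 [ZMOD 3] := by
  classical
  let b := Module.Free.chooseBasis ℤ (𝓞 F)
  set N := Algebra.leftMulMatrix b φ with hN
  have hlam : (lam : 𝓞 F) = -(1 - (3:ℤ) • φ) := by
    rw [hφ, zsmul_eq_mul]; push_cast; ring
  have hmat : Algebra.leftMulMatrix b (lam : 𝓞 F) = -((1 : Matrix _ _ ℤ) - (3:ℤ) • N) := by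
    rw [hlam, map_neg, map_sub, map_one, map_zsmul]
  have hnorm : Algebra.norm ℤ ((lam : 𝓞 F)) = (Algebra.leftMulMatrix b (lam : 𝓞 F)).det :=
    Algebra.norm_eq_matrix_det b _
  have hunit : IsUnit (Algebra.norm ℤ ((lam : 𝓞 F))) := lam.isUnit.map (Algebra.norm ℤ)
  rw [hnorm, hmat, Matrix.det_neg] at hunit
  have hdunit : IsUnit ((1 : Matrix _ _ ℤ) - (3:ℤ) • N).det :=
    isUnit_of_mul_isUnit_right hunit
  have hd : ((1 : Matrix _ _ ℤ) - (3:ℤ) • N).det = 1 ∨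
      ((1 : Matrix _ _ ℤ) - (3:ℤ) • N).det = -1 := Int.isUnit_iff.mp hdunit
  have hdvd := aux_det N
  have htr : Algebra.trace ℤ (𝓞 F) φ = Matrix.trace N := Algebra.trace_eq_matrix_trace b φ
  have h3 : (3:ℤ) ∣ Matrix.trace N := by
    obtain ⟨c, hc⟩ := hdvd
    rcases hd with h | h <;> rw [h] at hc <;> omega
  rw [htr]
  exact Int.modEq_zero_iff_dvd.mpr h3
end
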